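/- arXiv:2312.03329 — 3 statements merged into one kernel-verified Lean document; each statement's English description precedes it below -/
import Mathlib

section
/- Let (X, G) be a minimal distal topological dynamical system with X compact metric. Then every quasi-factor Z of (X, G) (i.e. every minimal subsystem of the induced system on the hyperspace 2^X) is a factor of the dynamical system (E(X,G), G): there exists a continuous surjective G-equivariant map from E(X,G) onto Z. -/
/-!
Let `J` be the enveloping semigroup of the joint action of `G` on `X` and on its hyperspace, so
that `E(X,G)` is the image of `J` under the first projection. Distality makes every element of
`E(X,G)` injective, so an idempotent of `J` acts trivially on `X`; by the Ellis–Numakura lemma every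
`v ∈ J` then has a `w ∈ J` with `w * v` acting as the identity on `X`. An element acting as the
identity on `X` can only enlarge compact sets, and minimality of `Z` lets one shrink them back, so
such an element fixes `Z` pointwise. Hence, for `A₀ ∈ Z`, the point `v.2 A₀` depends only on `v.1`,
and `v.1 ↦ v.2 A₀` is the factor map; it is continuous because `J` is compact.
-/

open TopologicalSpace Set Function

namespace Function.End

variable {α β : Type*}

theorem eq_one_of_isIdempotentElem {f : Function.End α} (hf : IsIdempotentElem f)
    (hinj : Injective f) : f = 1 :=
  funext fun x => hinj (congrFun hf x)

variable [TopologicalSpace α] [TopologicalSpace β]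

instance : TopologicalSpace (Function.End α) := Pi.topologicalSpace

instance [T2Space α] : T2Space (Function.End α) := Pi.t2Space

instance [CompactSpace α] : CompactSpace (Function.End α) := Function.compactSpace

theorem continuous_mul_const (f : Function.End α) : Continuous (· * f) :=
  continuous_pi fun x => continuous_apply (f x)

theorem continuous_const_mul {f : Function.End α} (hf : Continuous f) : Continuous (f * ·) :=
  continuous_pi fun x => hf.comp (continuous_apply x)

theorem continuous_mul_const_prod (r : Function.End α × Function.End β) : Continuous (· * r) :=
  ((continuous_mul_const r.1).comp continuous_fst).prodMk
    ((continuous_mul_const r.2).comp continuous_snd)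

end Function.End

theorem exists_isIdempotentElem_mul_right {M : Type*} [Semigroup M] [TopologicalSpace M]
    [T2Space M] (hM : ∀ r : M, Continuous (· * r)) {T : Set M} (hT : IsCompact T)
    (hTmul : ∀ a ∈ T, ∀ b ∈ T, a * b ∈ T) {t : M} (ht : t ∈ T) :
    ∃ a ∈ T, IsIdempotentElem (a * t) := by
  obtain ⟨_, ⟨a, ha, rfl⟩, hm⟩ := exists_idempotent_in_compact_subsemigroup hM ((· * t) '' T)
    ⟨t * t, t, ht, rfl⟩ (hT.image (hM t)) (by
      rintro _ ⟨a, ha, rfl⟩ _ ⟨b, hb, rfl⟩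
      exact ⟨a * t * b, hTmul _ (hTmul a ha t ht) b hb, by simp only [mul_assoc]⟩)
  exact ⟨a, ha, hm⟩

theorem MonoidHom.mul_mem_closure_range {G M : Type*} [Monoid G] [Monoid M] [TopologicalSpace M]
    (ρ : G →* M) (hleft : ∀ g, Continuous (ρ g * ·)) (hright : ∀ r : M, Continuous (· * r))
    {a b : M} (ha : a ∈ closure (Set.range ρ)) (hb : b ∈ closure (Set.range ρ)) :
    a * b ∈ closure (Set.range ρ) := by
  have hleft_mem : ∀ g, ρ g * b ∈ closure (Set.range ρ) := fun g =>
    map_mem_closure (hleft g) hb (by rintro _ ⟨h, rfl⟩; exact ⟨g * h, map_mul ρ g h⟩)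
  simpa only [closure_closure] using
    map_mem_closure (t := closure (Set.range ρ)) (hright b) ha
      (by rintro _ ⟨g, rfl⟩; exact hleft_mem g)

section FactorThrough

variable {α β γ : Type*} [Nonempty α] {K : Set α} {p : α → β} {q : α → γ}

theorem comp_invFunOn_apply (hpq : ∀ a ∈ K, ∀ b ∈ K, p a = p b → q a = q b) {a : α}
    (ha : a ∈ K) : (q ∘ invFunOn p K) (p a) = q a :=
  hpq _ (invFunOn_mem ⟨a, ha, rfl⟩) a ha (invFunOn_eq ⟨a, ha, rfl⟩)

theorem image_comp_invFunOn (hpq : ∀ a ∈ K, ∀ b ∈ K, p a = p b → q a = q b) :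
    (q ∘ invFunOn p K) '' (p '' K) = q '' K := by
  rw [image_image]
  exact image_congr fun a ha => comp_invFunOn_apply hpq ha

theorem continuousOn_comp_invFunOn [TopologicalSpace α] [TopologicalSpace β] [TopologicalSpace γ]
    [T2Space β] (hK : IsCompact K) (hp : Continuous p) (hq : Continuous q)
    (hpq : ∀ a ∈ K, ∀ b ∈ K, p a = p b → q a = q b) :
    ContinuousOn (q ∘ invFunOn p K) (p '' K) := by
  refine continuousOn_iff_isClosed.2 fun C hC => ⟨p '' (K ∩ q ⁻¹' C), ?_, ?_⟩
  · exact ((hK.inter_right (hC.preimage hq)).image hp).isClosed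
  · ext b
    constructor
    · rintro ⟨hbC, a, ha, rfl⟩
      rw [mem_preimage, comp_invFunOn_apply hpq ha] at hbC
      exact ⟨⟨a, ⟨ha, hbC⟩, rfl⟩, a, ha, rfl⟩
    · rintro ⟨⟨a, ⟨ha, haC⟩, rfl⟩, -⟩
      exact ⟨by rwa [mem_preimage, comp_invFunOn_apply hpq ha], a, ha, rfl⟩

end FactorThrough

theorem injective_of_mem_closure_range_smul {G X : Type*} [TopologicalSpace X] [SMul G X]
    (hdistal : ∀ x₁ x₂ : X,
      (∃ x : X, (x, x) ∈ closure (Set.range fun g : G => (g • x₁, g • x₂))) → x₁ = x₂)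
    {f : X → X} (hf : f ∈ closure (Set.range fun g : G => fun x : X => g • x)) :
    Injective f := by
  intro x₁ x₂ hfx
  have h := map_mem_closure (t := Set.range fun g : G => (g • x₁, g • x₂))
    (f := fun f : X → X => (f x₁, f x₂)) (by fun_prop) hf (by rintro _ ⟨g, rfl⟩; exact ⟨g, rfl⟩)
  rw [hfx] at h
  exact hdistal x₁ x₂ ⟨f x₂, h⟩

namespace TopologicalSpace.NonemptyCompacts

variable {G X : Type*} [Monoid G] [TopologicalSpace X] [MulAction G X] [ContinuousConstSMul G X]

instance : SMul G (NonemptyCompacts X) :=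
  ⟨fun g A => A.map (g • ·) (continuous_const_smul g)⟩

theorem coe_smul (g : G) (A : NonemptyCompacts X) :
    ((g • A : NonemptyCompacts X) : Set X) = (g • ·) '' A := rfl

instance : MulAction G (NonemptyCompacts X) where
  one_smul A := NonemptyCompacts.ext (by simp [coe_smul])
  mul_smul g h A := NonemptyCompacts.ext (by simp [coe_smul, image_image, mul_smul])

instance : ContinuousConstSMul G (NonemptyCompacts X) :=
  ⟨fun g => (continuous_const_smul g).nonemptyCompacts_map⟩

theorem isClosed_setOf_mem [T2Space X] : IsClosed {p : X × NonemptyCompacts X | p.1 ∈ p.2} := by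
  have h := (isOpen_setOfPred_disjoint_coe (α := X)).preimage
    ((continuous_singleton.comp continuous_fst).prodMk continuous_snd)
  simpa [← isOpen_compl_iff, compl_ofPred] using h

end TopologicalSpace.NonemptyCompacts

/-- The enveloping semigroup of the action of `G` on the disjoint union of `X` and `Y`, each
element being recorded by its restrictions to `X` and to `Y`. -/
def jointEnvelope (G X Y : Type*) [Monoid G] [TopologicalSpace X] [TopologicalSpace Y]
    [MulAction G X] [MulAction G Y] : Set (Function.End X × Function.End Y) :=
  closure (Set.range (MulAction.toEndHom.prod MulAction.toEndHom : G →* _))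

namespace jointEnvelope

section General

variable {G X Y : Type*} [Monoid G] [TopologicalSpace X] [TopologicalSpace Y]
  [MulAction G X] [MulAction G Y]

theorem smul_mem (g : G) :
    ((g • · : Function.End X), (g • · : Function.End Y)) ∈ jointEnvelope G X Y :=
  subset_closure (mem_range_self g)

theorem map_mem {α : Type*} [TopologicalSpace α] {C : Set α} (hC : IsClosed C)
    {φ : Function.End X × Function.End Y → α} (hφ : Continuous φ)
    (h : ∀ g : G, φ ((g • · : Function.End X), (g • · : Function.End Y)) ∈ C)
    {v : Function.End X × Function.End Y} (hv : v ∈ jointEnvelope G X Y) : φ v ∈ C :=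
  hC.closure_subset (map_mem_closure hφ hv (by rintro _ ⟨g, rfl⟩; exact h g))

theorem fst_mem_closure_range_smul {v : Function.End X × Function.End Y}
    (hv : v ∈ jointEnvelope G X Y) :
    v.1 ∈ closure (Set.range fun g : G => fun x : X => g • x) :=
  map_mem isClosed_closure continuous_fst (fun g => subset_closure (mem_range_self g)) hv

theorem snd_apply_mem {Z : Set Y} (hZcl : IsClosed Z) (hZinv : ∀ g : G, ∀ A ∈ Z, g • A ∈ Z)
    {v : Function.End X × Function.End Y} (hv : v ∈ jointEnvelope G X Y) {A : Y} (hA : A ∈ Z) :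
    v.2 A ∈ Z :=
  map_mem hZcl (φ := fun v => v.2 A) (by fun_prop) (fun g => hZinv g A hA) hv

theorem mul_mem [ContinuousConstSMul G X] [ContinuousConstSMul G Y]
    {v w : Function.End X × Function.End Y} (hv : v ∈ jointEnvelope G X Y)
    (hw : w ∈ jointEnvelope G X Y) : v * w ∈ jointEnvelope G X Y :=
  MonoidHom.mul_mem_closure_range _
    (fun g => ((Function.End.continuous_const_mul (continuous_const_smul g)).comp
      continuous_fst).prodMk
      ((Function.End.continuous_const_mul (continuous_const_smul g)).comp continuous_snd))
    Function.End.continuous_mul_const_prod hv hw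

variable [CompactSpace X] [CompactSpace Y]

theorem isCompact : IsCompact (jointEnvelope G X Y) := isClosed_closure.isCompact

theorem image_fst [T2Space X] :
    Prod.fst '' jointEnvelope G X Y = closure (Set.range fun g : G => fun x : X => g • x) := by
  rw [jointEnvelope, image_closure_of_isCompact isClosed_closure.isCompact
    continuous_fst.continuousOn, ← range_comp]
  rfl

theorem image_snd_apply [T2Space Y] (y : Y) :
    (fun v => v.2 y) '' jointEnvelope G X Y = closure (MulAction.orbit G y) := by
  rw [jointEnvelope, image_closure_of_isCompact isClosed_closure.isCompact
    (by fun_prop), ← range_comp]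
  rfl

variable [T2Space X] [T2Space Y]

/-- Ellis–Numakura gives an idempotent `w * v`, which distality forces to be trivial on `X`. -/
theorem exists_fst_mul_eq_one
    (hdistal : ∀ x₁ x₂ : X,
      (∃ x : X, (x, x) ∈ closure (Set.range fun g : G => (g • x₁, g • x₂))) → x₁ = x₂)
    {T : Set (Function.End X × Function.End Y)} (hTJ : T ⊆ jointEnvelope G X Y)
    (hT : IsClosed T) (hTmul : ∀ a ∈ T, ∀ b ∈ T, a * b ∈ T)
    {v : Function.End X × Function.End Y} (hv : v ∈ T) : ∃ w ∈ T, (w * v).1 = 1 := by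
  obtain ⟨w, hw, hidem⟩ := exists_isIdempotentElem_mul_right
    Function.End.continuous_mul_const_prod hT.isCompact hTmul hv
  exact ⟨w, hw, Function.End.eq_one_of_isIdempotentElem (congrArg Prod.fst hidem)
    (injective_of_mem_closure_range_smul hdistal
      (fst_mem_closure_range_smul (hTJ (hTmul w hw v hv))))⟩

end General

section Hyperspace

variable {G X : Type*} [Monoid G] [TopologicalSpace X] [T2Space X]
  [MulAction G X] [ContinuousConstSMul G X]
  {v : Function.End X × Function.End (NonemptyCompacts X)}

theorem fst_apply_mem_snd_apply (hv : v ∈ jointEnvelope G X (NonemptyCompacts X))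
    {A : NonemptyCompacts X} {x : X} (hx : x ∈ A) : v.1 x ∈ v.2 A :=
  map_mem NonemptyCompacts.isClosed_setOf_mem (φ := fun v => (v.1 x, v.2 A)) (by fun_prop)
    (fun g => mem_image_of_mem (g • ·) hx) hv

variable [CompactSpace X]

theorem snd_apply_eq_self_of_fst_eq_one
    (hdistal : ∀ x₁ x₂ : X,
      (∃ x : X, (x, x) ∈ closure (Set.range fun g : G => (g • x₁, g • x₂))) → x₁ = x₂)
    (hv : v ∈ jointEnvelope G X (NonemptyCompacts X)) (hv1 : v.1 = 1) {B : NonemptyCompacts X}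
    (hB : B ∈ closure (MulAction.orbit G (v.2 B))) : v.2 B = B := by
  have le_of_fst_eq_one : ∀ r ∈ jointEnvelope G X (NonemptyCompacts X), r.1 = 1 →
      ∀ A : NonemptyCompacts X, A ≤ r.2 A := fun r hr hr1 A x hx => by
    have h := fst_apply_mem_snd_apply hr hx
    rwa [hr1] at h
  obtain ⟨s, hs, hsB : s.2 (v.2 B) = B⟩ := (image_snd_apply (G := G) (X := X) (v.2 B)).symm ▸ hB
  -- a left inverse of `s * v` on `X` inside the stabiliser of `B` shrinks `v.2 B` back into `B`
  set T := jointEnvelope G X (NonemptyCompacts X) ∩ {w | w.2 B = B}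
  have hT : IsClosed T := isClosed_closure.inter (isClosed_eq (by fun_prop) continuous_const)
  have hTmul : ∀ a ∈ T, ∀ b ∈ T, a * b ∈ T := fun a ha b hb =>
    ⟨mul_mem ha.1 hb.1, show a.2 (b.2 B) = B by rw [hb.2, ha.2]⟩
  obtain ⟨w, hw, hwsv⟩ := exists_fst_mul_eq_one hdistal inter_subset_left hT hTmul
    (v := s * v) ⟨mul_mem hs hv, hsB⟩
  have hws1 : (w * s).1 = 1 := by
    have h : (w * s).1 * v.1 = 1 := hwsv
    rwa [hv1, mul_one] at h
  have hwsB : (w * s).2 (v.2 B) = B := show w.2 (s.2 (v.2 B)) = B by rw [hsB, hw.2]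
  refine le_antisymm ?_ (le_of_fst_eq_one v hv hv1 B)
  simpa [hwsB] using le_of_fst_eq_one (w * s) (mul_mem hw.1 hs) hws1 (v.2 B)

theorem snd_apply_eq_of_fst_eq
    (hdistal : ∀ x₁ x₂ : X,
      (∃ x : X, (x, x) ∈ closure (Set.range fun g : G => (g • x₁, g • x₂))) → x₁ = x₂)
    {Z : Set (NonemptyCompacts X)} (hZcl : IsClosed Z) (hZinv : ∀ g : G, ∀ A ∈ Z, g • A ∈ Z)
    (hZmin : ∀ A ∈ Z, Z ⊆ closure (MulAction.orbit G A)) {A : NonemptyCompacts X} (hA : A ∈ Z)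
    {v' : Function.End X × Function.End (NonemptyCompacts X)}
    (hv : v ∈ jointEnvelope G X (NonemptyCompacts X))
    (hv' : v' ∈ jointEnvelope G X (NonemptyCompacts X)) (h : v.1 = v'.1) : v.2 A = v'.2 A := by
  obtain ⟨w, hw, hwv⟩ := exists_fst_mul_eq_one hdistal subset_rfl isClosed_closure
    (fun a ha b hb => mul_mem ha hb) hv
  have hvw : (v * w).1 = 1 := funext fun x =>
    injective_of_mem_closure_range_smul hdistal (fst_mem_closure_range_smul hw)
      (congrFun hwv (w.1 x))
  have hwv' : (w * v').1 = 1 := by rw [← hwv]; exact congrArg (w.1 * ·) h.symm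
  have hA' : v'.2 A ∈ Z := snd_apply_mem hZcl hZinv hv' hA
  calc v.2 A = v.2 (w.2 (v'.2 A)) :=
        congrArg v.2 (snd_apply_eq_self_of_fst_eq_one hdistal (mul_mem hw hv') hwv'
          (hZmin _ (snd_apply_mem hZcl hZinv (mul_mem hw hv') hA) hA)).symm
    _ = v'.2 A := snd_apply_eq_self_of_fst_eq_one hdistal (mul_mem hv hw) hvw
          (hZmin _ (snd_apply_mem hZcl hZinv (mul_mem hv hw) hA') hA')

end Hyperspace

end jointEnvelope

theorem quasifactor_of_distal_is_factor_of_enveloping_general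
    {G X : Type*} [Group G]
    [MetricSpace X] [CompactSpace X]
    [MulAction G X] [ContinuousConstSMul G X]
    (hdistal : ∀ x₁ x₂ : X,
      (∃ x : X, (x, x) ∈ closure (Set.range fun g : G => (g • x₁, g • x₂))) → x₁ = x₂)
    (E : Set (X → X)) (hE : E = closure (Set.range fun g : G => fun x : X => g • x))
    (σ : G → NonemptyCompacts X → NonemptyCompacts X)
    (hσ : ∀ (g : G) (A : NonemptyCompacts X), ((σ g A : Set X)) = (fun x : X => g • x) '' A)
    (Z : Set (NonemptyCompacts X)) (hZne : Z.Nonempty) (hZcl : IsClosed Z)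
    (hZinv : ∀ (g : G), ∀ A ∈ Z, σ g A ∈ Z)
    (hZmin : ∀ A ∈ Z, Z ⊆ closure (Set.range fun g : G => σ g A)) :
    ∃ π : (X → X) → NonemptyCompacts X,
      ContinuousOn π E ∧ π '' E = Z ∧
      ∀ (g : G), ∀ f ∈ E, π (g • f) = σ g (π f) := by
  obtain rfl : σ = fun g A => g • A := funext₂ fun g A => NonemptyCompacts.ext (hσ g A)
  obtain ⟨A₀, hA₀⟩ := hZne
  set J := jointEnvelope G X (NonemptyCompacts X)
  have hfib : ∀ v ∈ J, ∀ w ∈ J, v.1 = w.1 → v.2 A₀ = w.2 A₀ := fun v hv w hw =>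
    jointEnvelope.snd_apply_eq_of_fst_eq hdistal hZcl hZinv hZmin hA₀ hv hw
  obtain rfl : E = Prod.fst '' J := hE.trans jointEnvelope.image_fst.symm
  refine ⟨(fun v => v.2 A₀) ∘ invFunOn (Prod.fst : _ → Function.End X) J, ?_, ?_, ?_⟩
  · exact continuousOn_comp_invFunOn jointEnvelope.isCompact continuous_fst (by fun_prop) hfib
  · refine (image_comp_invFunOn hfib).trans ?_
    rw [jointEnvelope.image_snd_apply]
    exact (closure_minimal (by rintro _ ⟨g, rfl⟩; exact hZinv g A₀ hA₀) hZcl).antisymm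
      (hZmin A₀ hA₀)
  · rintro g _ ⟨v, hv, rfl⟩
    exact (comp_invFunOn_apply hfib (jointEnvelope.mul_mem (jointEnvelope.smul_mem g) hv)).trans
      (congrArg (g • ·) (comp_invFunOn_apply hfib hv).symm)

/-- Let `(X, G)` be a minimal distal topological dynamical system with
`X` compact metric.  The hyperspace `2^X` of nonempty closed (= compact) subsets of `X`
with the Hausdorff metric carries the induced action `g • A = {g • x : x ∈ A}`, encoded
here by a map `σ` with `(σ g A : Set X) = (g • ·) '' A`.  Let `Z ⊆ 2^X` be a quasi-factor
of `(X, G)`, i.e. a minimal subsystem of `(2^X, G)`.  Then `Z` is a factor of the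
enveloping semigroup system `(E(X,G), G)` (with `E(X,G)` the pointwise closure in `X → X`
of the maps `x ↦ g • x`, and `G` acting pointwise): there is a continuous surjective
`G`-equivariant map from `E(X,G)` onto `Z`. -/
theorem quasifactor_of_distal_is_factor_of_enveloping
    {G X : Type*} [Group G]
    [MetricSpace X] [CompactSpace X]
    [MulAction G X] [ContinuousConstSMul G X]
    (hmin : MulAction.IsMinimal G X)
    (hdistal : ∀ x₁ x₂ : X,
      (∃ x : X, (x, x) ∈ closure (Set.range fun g : G => (g • x₁, g • x₂))) → x₁ = x₂)
    (E : Set (X → X)) (hE : E = closure (Set.range fun g : G => fun x : X => g • x))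
    (σ : G → NonemptyCompacts X → NonemptyCompacts X)
    (hσ : ∀ (g : G) (A : NonemptyCompacts X), ((σ g A : Set X)) = (fun x : X => g • x) '' A)
    (Z : Set (NonemptyCompacts X)) (hZne : Z.Nonempty) (hZcl : IsClosed Z)
    (hZinv : ∀ (g : G), ∀ A ∈ Z, σ g A ∈ Z)
    (hZmin : ∀ A ∈ Z, Z ⊆ closure (Set.range fun g : G => σ g A)) :
    ∃ π : (X → X) → NonemptyCompacts X,
      ContinuousOn π E ∧ π '' E = Z ∧
      ∀ (g : G), ∀ f ∈ E, π (g • f) = σ g (π f) :=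
  quasifactor_of_distal_is_factor_of_enveloping_general hdistal E hE σ hσ Z hZne hZcl hZinv hZmin
end

section
/- Let (X, G) be a minimal distal topological dynamical system with X compact metric, and let (Y, G) be a minimal compact metric system which is disjoint from (E(X,G), G), i.e. the product system (Y × E(X,G), G) with the diagonal action is minimal. Suppose (Q, G) is a compact metric system admitting a factor map φ : (Y × X, G) → (Q, G) and a factor map θ : (Q, G) → (Y, G) with θ ∘ φ equal to the projection π_Y : Y × X → Y. Then there exist a compact metric system (Z, G), a factor map from (X, G) onto (Z, G), and a G-equivariant homeomorphism from Q onto the product system Y × Z whose composition with the projection onto Y equals θ. -/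
universe u

/-- Let `(X, G)` be a minimal distal system with `X` compact metric, and
let `(Y, G)` be a minimal compact metric system disjoint from the enveloping semigroup
system `(E(X,G), G)`; here `E = E(X,G)` is the pointwise closure in `X → X` of the maps
`x ↦ g • x`, `G` acts on it pointwise, and disjointness means the product system
`(Y × E, G)` is minimal, i.e. every diagonal orbit is dense in `Y × E`.  Suppose `(Q, G)`
is a compact metric system with factor maps `φ : (Y × X, G) → (Q, G)` and
`θ : (Q, G) → (Y, G)` such that `θ ∘ φ = π_Y`.  Then there exist a compact metric system
`(Z, G)` (the action given by a map `σ : G → Z → Z` acting by homeomorphisms), a factor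
map from `(X, G)` onto `(Z, G)`, and a `G`-equivariant homeomorphism from `Q` onto the
product system `Y × Z` whose composition with the projection onto `Y` equals `θ`. -/
theorem intermediate_factor_distal
    {G : Type*} {X Y Q : Type u} [Group G]
    [MetricSpace X] [CompactSpace X]
    [MetricSpace Y] [CompactSpace Y]
    [MetricSpace Q] [CompactSpace Q]
    [MulAction G X] [MulAction G Y] [MulAction G Q]
    [ContinuousConstSMul G X] [ContinuousConstSMul G Y] [ContinuousConstSMul G Q]
    (hXmin : MulAction.IsMinimal G X)
    (hXdistal : ∀ x₁ x₂ : X,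
      (∃ x : X, (x, x) ∈ closure (Set.range fun g : G => (g • x₁, g • x₂))) → x₁ = x₂)
    (hYmin : MulAction.IsMinimal G Y)
    (E : Set (X → X)) (hE : E = closure (Set.range fun g : G => fun x : X => g • x))
    (hdisj : ∀ (y : Y), ∀ f ∈ E, ∀ (y' : Y), ∀ f' ∈ E,
      (y', f') ∈ closure (Set.range fun g : G => ((g • y, g • f) : Y × (X → X))))
    (φ : Y × X → Q) (hφc : Continuous φ) (hφs : Function.Surjective φ)
    (hφe : ∀ (g : G) (p : Y × X), φ (g • p) = g • φ p)
    (θ : Q → Y) (hθc : Continuous θ) (hθs : Function.Surjective θ)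
    (hθe : ∀ (g : G) (q : Q), θ (g • q) = g • θ q)
    (hθφ : ∀ p : Y × X, θ (φ p) = p.1) :
    ∃ (Z : Type u) (_ : MetricSpace Z) (_ : CompactSpace Z) (σ : G → Z → Z),
      (∀ g : G, Continuous (σ g)) ∧
      (∀ z : Z, σ 1 z = z) ∧
      (∀ (g g' : G) (z : Z), σ (g * g') z = σ g (σ g' z)) ∧
      (∃ π : X → Z, Continuous π ∧ Function.Surjective π ∧
        ∀ (g : G) (x : X), π (g • x) = σ g (π x)) ∧
      (∃ h : Q ≃ₜ Y × Z,
        (∀ (g : G) (q : Q), h (g • q) = (g • (h q).1, σ g (h q).2)) ∧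
        (∀ q : Q, (h q).1 = θ q)) := by
  classical
  by_cases hne : Nonempty (Y × X)
  case neg =>
    haveI hYX : IsEmpty (Y × X) := not_nonempty_iff.mp hne
    haveI hQ : IsEmpty Q := ⟨fun q => by obtain ⟨p, _⟩ := hφs q; exact IsEmpty.false p⟩
    haveI : IsEmpty (Y × X) := hYX
    refine ⟨X, inferInstance, inferInstance, fun g x => g • x,
      fun g => continuous_const_smul g, fun z => one_smul G z,
      fun g g' z => mul_smul g g' z,
      ⟨id, continuous_id, Function.surjective_id, fun g x => rfl⟩,
      ⟨⟨Equiv.equivOfIsEmpty Q (Y × X),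
        continuous_of_const (fun a b => isEmptyElim a),
        continuous_of_const (fun a b => isEmptyElim a)⟩,
        fun g q => isEmptyElim q, fun q => isEmptyElim q⟩⟩
  case pos =>
  obtain ⟨y₀, x₀⟩ := hne
  -- the key lemma: if φ identifies (y₀,x) and (y₀,x') for one y₀, it does for all y
  have key : ∀ (x x' : X) (y₁ : Y), φ (y₁, x) = φ (y₁, x') → ∀ y : Y, φ (y, x) = φ (y, x') := by
    intro x x' y₁ h0 y
    have hidE : (id : X → X) ∈ E := by
      rw [hE]; exact subset_closure ⟨1, funext fun a => one_smul G a⟩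
    have hS : IsClosed {p : Y × (X → X) | φ (p.1, p.2 x) = φ (p.1, p.2 x')} :=
      isClosed_eq
        (hφc.comp (continuous_fst.prodMk ((continuous_apply x).comp continuous_snd)))
        (hφc.comp (continuous_fst.prodMk ((continuous_apply x').comp continuous_snd)))
    have hsub : closure (Set.range fun g : G => ((g • y₁, g • (id : X → X)) : Y × (X → X)))
        ⊆ {p : Y × (X → X) | φ (p.1, p.2 x) = φ (p.1, p.2 x')} := by
      apply closure_minimal _ hS
      rintro _ ⟨g, rfl⟩
      show φ (g • y₁, (g • (id : X → X)) x) = φ (g • y₁, (g • (id : X → X)) x')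
      have e1 : φ (g • y₁, g • x) = g • φ (y₁, x) := hφe g (y₁, x)
      have e2 : φ (g • y₁, g • x') = g • φ (y₁, x') := hφe g (y₁, x')
      show φ (g • y₁, g • x) = φ (g • y₁, g • x')
      rw [e1, e2, h0]
    have hmem := hsub (hdisj y₁ id hidE y id hidE)
    exact hmem
  -- Z is the fiber of θ over y₀
  haveI hZc : CompactSpace {q : Q // θ q = y₀} :=
    isCompact_iff_compactSpace.mp ((isClosed_eq hθc continuous_const).isCompact)
  set Z := {q : Q // θ q = y₀} with hZ
  let π : X → Z := fun x => ⟨φ (y₀, x), hθφ (y₀, x)⟩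
  have hπc : Continuous π :=
    (hφc.comp (continuous_const.prodMk continuous_id)).subtype_mk _
  have hπs : Function.Surjective π := by
    rintro ⟨q, hq⟩
    obtain ⟨⟨y, x⟩, rfl⟩ := hφs q
    have hy : y = y₀ := (hθφ (y, x)).symm.trans hq
    exact ⟨x, Subtype.ext (by simp [π, hy])⟩
  -- well-definedness transfers
  have hwd : ∀ x x', π x = π x' → ∀ y : Y, φ (y, x) = φ (y, x') := by
    intro x x' h y
    exact key x x' y₀ (congrArg Subtype.val h) y
  have hwd2 : ∀ x x', π x = π x' → ∀ g : G, π (g • x) = π (g • x') := by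
    intro x x' h g
    apply Subtype.ext
    show φ (y₀, g • x) = φ (y₀, g • x')
    have e1 : φ (y₀, g • x) = g • φ (g⁻¹ • y₀, x) := by
      rw [← hφe g (g⁻¹ • y₀, x)]
      congr 1
      show (y₀, g • x) = (g • (g⁻¹ • y₀), g • x)
      rw [smul_inv_smul]
    have e2 : φ (y₀, g • x') = g • φ (g⁻¹ • y₀, x') := by
      rw [← hφe g (g⁻¹ • y₀, x')]
      congr 1
      show (y₀, g • x') = (g • (g⁻¹ • y₀), g • x')
      rw [smul_inv_smul]
    rw [e1, e2, hwd x x' h (g⁻¹ • y₀)]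
  have hπquot : Topology.IsQuotientMap π := (hπc.isClosedMap).isQuotientMap hπc hπs
  -- the action on Z
  let σ : G → Z → Z := fun g z => π (g • Function.surjInv hπs z)
  have hπσ : ∀ (g : G) (x : X), π (g • x) = σ g (π x) := by
    intro g x
    exact (hwd2 _ _ (Function.surjInv_eq hπs (π x)) g).symm
  have hσc : ∀ g : G, Continuous (σ g) := by
    intro g
    rw [hπquot.continuous_iff]
    have : σ g ∘ π = fun x => π (g • x) := funext fun x => (hπσ g x).symm
    rw [this]
    exact hπc.comp (continuous_const_smul g)
  have hσ1 : ∀ z : Z, σ 1 z = z := by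
    intro z
    show π ((1 : G) • Function.surjInv hπs z) = z
    rw [one_smul]
    exact Function.surjInv_eq hπs z
  have hσm : ∀ (g g' : G) (z : Z), σ (g * g') z = σ g (σ g' z) := by
    intro g g' z
    show π ((g * g') • Function.surjInv hπs z) = σ g (π (g' • Function.surjInv hπs z))
    rw [← hπσ g, mul_smul]
  -- the homeomorphism
  let F : Q → Y × Z := fun q => (θ q, π (Function.surjInv hφs q).2)
  have hFφ : ∀ p : Y × X, F (φ p) = (p.1, π p.2) := by
    rintro ⟨y, x⟩
    have hp : φ (Function.surjInv hφs (φ (y, x))) = φ (y, x) := Function.surjInv_eq hφs _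
    set p' := Function.surjInv hφs (φ (y, x)) with hp'
    have h1 : p'.1 = y := by
      have h := hθφ p'
      rw [hp] at h
      rw [← h]
      exact hθφ (y, x)
    have h2 : π p'.2 = π x := by
      apply Subtype.ext
      show φ (y₀, p'.2) = φ (y₀, x)
      apply key p'.2 x y
      have : φ (p'.1, p'.2) = φ (y, x) := by rw [← hp]
      rw [h1] at this
      exact this
    show (θ (φ (y, x)), π p'.2) = (y, π x)
    rw [hθφ (y, x), h2]
  have hFc : Continuous F := hθc.prodMk (by
    rw [(hφc.isClosedMap.isQuotientMap hφc hφs).continuous_iff]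
    have : (fun q => π (Function.surjInv hφs q).2) ∘ φ = fun p : Y × X => π p.2 := by
      funext p
      have := hFφ p
      exact congrArg Prod.snd this
    rw [this]
    exact hπc.comp continuous_snd)
  let K : Y × Z → Q := fun p => φ (p.1, Function.surjInv hπs p.2)
  have hKπ : ∀ (y : Y) (x : X), K (y, π x) = φ (y, x) := by
    intro y x
    exact hwd _ _ (Function.surjInv_eq hπs (π x)) y
  have hKc : Continuous K := by
    have hq : Topology.IsQuotientMap (Prod.map (id : Y → Y) π) := by
      refine (Continuous.isClosedMap ?_).isQuotientMap ?_ ?_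
      · exact continuous_id.prodMap hπc
      · exact continuous_id.prodMap hπc
      · exact Function.Surjective.prodMap Function.surjective_id hπs
    rw [hq.continuous_iff]
    have : K ∘ Prod.map id π = φ := by
      funext p
      exact hKπ p.1 p.2
    rw [this]
    exact hφc
  have hKF : Function.LeftInverse K F := by
    intro q
    obtain ⟨⟨y, x⟩, rfl⟩ := hφs q
    rw [hFφ (y, x)]
    exact hKπ y x
  have hFK : Function.RightInverse K F := by
    rintro ⟨y, z⟩
    obtain ⟨x, rfl⟩ := hπs z
    rw [show K (y, π x) = φ (y, x) from hKπ y x, hFφ (y, x)]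
  have hFe : ∀ (g : G) (q : Q), F (g • q) = (g • (F q).1, σ g (F q).2) := by
    intro g q
    obtain ⟨⟨y, x⟩, rfl⟩ := hφs q
    rw [← hφe g (y, x)]
    have hgp : (g • (y, x) : Y × X) = (g • y, g • x) := rfl
    rw [hgp, hFφ (g • y, g • x), hFφ (y, x)]
    show (g • y, π (g • x)) = (g • y, σ g (π x))
    rw [hπσ g x]
  exact ⟨Z, inferInstance, hZc, σ, hσc, hσ1, hσm, ⟨π, hπc, hπs, hπσ⟩,
    ⟨⟨⟨F, K, hKF, hFK⟩, hFc, hKc⟩, hFe, fun q => rfl⟩⟩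
end

section
/- Let (X, G) be a minimal distal topological dynamical system with X compact Hausdorff. Then the enveloping semigroup system (E(X,G), G) is minimal and distal. -/
/-- Let `(X, G)` be a minimal distal topological dynamical system with
`X` compact Hausdorff.  The enveloping semigroup `E = E(X,G)` is the closure, in the
product space `X → X` (pointwise convergence), of the maps `x ↦ g • x`; `G` acts on it
pointwise: `(g • f) x = g • f x`.  Then the system `(E, G)` is minimal and distal:
`E` is `G`-invariant, the orbit of every `f ∈ E` is dense in `E`, and any two points of
`E` that are proximal (the closure of their diagonal `G`-orbit meets the diagonal) are
equal. -/
theorem enveloping_semigroup_minimal_distal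
    {G X : Type*} [Group G]
    [TopologicalSpace X] [CompactSpace X] [T2Space X]
    [MulAction G X] [ContinuousConstSMul G X]
    (hmin : MulAction.IsMinimal G X)
    (hdistal : ∀ x₁ x₂ : X,
      (∃ x : X, (x, x) ∈ closure (Set.range fun g : G => (g • x₁, g • x₂))) → x₁ = x₂)
    (E : Set (X → X)) (hE : E = closure (Set.range fun g : G => fun x : X => g • x)) :
    (∀ (g : G), ∀ f ∈ E, g • f ∈ E) ∧
    (∀ f ∈ E, E ⊆ closure (Set.range fun g : G => g • f)) ∧
    (∀ f₁ ∈ E, ∀ f₂ ∈ E,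
      (∃ h : X → X, (h, h) ∈ closure (Set.range fun g : G => (g • f₁, g • f₂))) →
      f₁ = f₂) := by
  have hEclosed : IsClosed E := hE ▸ isClosed_closure
  have hEcompact : IsCompact E := hEclosed.isCompact
  -- right-composition is continuous in the pointwise topology
  have hcomp_right : ∀ q : X → X, Continuous fun p : X → X => p ∘ q := fun q =>
    continuous_pi fun x => continuous_apply (q x)
  have hsmul_cont : ∀ g : G, Continuous fun p : X → X => g • p := fun g =>
    continuous_pi fun x => (continuous_const_smul g).comp (continuous_apply x)
  -- E is G-invariant
  have hsmul_mem : ∀ (g : G), ∀ f ∈ E, g • f ∈ E := by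
    intro g f hf
    have himg : (fun p : X → X => g • p) '' E ⊆ E := by
      conv_lhs => rw [hE]
      refine (image_closure_subset_closure_image (hsmul_cont g)).trans ?_
      rw [hE]
      refine closure_mono ?_
      rintro _ ⟨_, ⟨h, rfl⟩, rfl⟩
      exact ⟨g * h, by funext x; simp [mul_smul]⟩
    exact himg ⟨f, hf, rfl⟩
  -- E is closed under composition
  have hcomp_mem : ∀ p ∈ E, ∀ q ∈ E, p ∘ q ∈ E := by
    intro p hp q hq
    have h1 : (fun r : X → X => r ∘ q) ''
        (Set.range fun g : G => fun x : X => g • x) ⊆ E := by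
      rintro _ ⟨_, ⟨g, rfl⟩, rfl⟩
      exact hsmul_mem g q hq
    have h2 : (fun r : X → X => r ∘ q) '' E ⊆ E := by
      conv_lhs => rw [hE]
      exact (image_closure_subset_closure_image (hcomp_right q)).trans
        (closure_minimal h1 hEclosed)
    exact h2 ⟨p, hp, rfl⟩
  -- any idempotent of E is the identity, by distality
  have hidem : ∀ u ∈ E, u ∘ u = u → u = id := by
    intro u hu huu
    funext x
    have hx : x = u x := by
      apply hdistal x (u x)
      refine ⟨u x, ?_⟩
      have hc : Continuous fun p : X → X => (p x, p (u x)) :=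
        (continuous_apply x).prodMk (continuous_apply (u x))
      have himg : (fun p : X → X => (p x, p (u x))) '' E ⊆
          closure (Set.range fun g : G => (g • x, g • u x)) := by
        conv_lhs => rw [hE]
        refine (image_closure_subset_closure_image hc).trans (closure_mono ?_)
        rintro _ ⟨_, ⟨g, rfl⟩, rfl⟩
        exact ⟨g, rfl⟩
      have hmem : (u x, u (u x)) ∈
          closure (Set.range fun g : G => (g • x, g • u x)) := himg ⟨u, hu, rfl⟩
      have huux : u (u x) = u x := congrFun huu x
      rwa [huux] at hmem
    exact hx.symm
  -- every element of E has a left inverse in E (Ellis argument)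
  have hleftinv : ∀ f ∈ E, ∃ h ∈ E, h ∘ f = id := by
    intro f hf
    letI : Semigroup (X → X) :=
      { mul := fun a b => a ∘ b
        mul_assoc := fun _ _ _ => rfl }
    have hco : ∀ r : X → X, Continuous (· * r) := fun r => hcomp_right r
    obtain ⟨m, hm, hmm⟩ := exists_idempotent_in_compact_subsemigroup hco
      ((fun p : X → X => p ∘ f) '' E) ⟨f ∘ f, f, hf, rfl⟩
      (hEcompact.image (hcomp_right f))
      (by
        rintro _ ⟨p, hp, rfl⟩ _ ⟨q, hq, rfl⟩
        exact ⟨(p ∘ f) ∘ q, hcomp_mem _ (hcomp_mem p hp f hf) q hq, rfl⟩)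
    obtain ⟨h, hh, rfl⟩ := hm
    exact ⟨h, hh, hidem _ (hcomp_mem h hh f hf) hmm⟩
  refine ⟨hsmul_mem, ?_, ?_⟩
  · -- minimality
    intro f hf p hp
    have key : (fun r : X → X => r ∘ f) '' E ⊆
        closure (Set.range fun g : G => g • f) := by
      conv_lhs => rw [hE]
      refine (image_closure_subset_closure_image (hcomp_right f)).trans (closure_mono ?_)
      rintro _ ⟨_, ⟨g, rfl⟩, rfl⟩
      exact ⟨g, rfl⟩
    obtain ⟨h, hh, hhf⟩ := hleftinv f hf
    have hph : (p ∘ h) ∘ f = p := by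
      show p ∘ (h ∘ f) = p
      rw [hhf, Function.comp_id]
    exact hph ▸ key ⟨p ∘ h, hcomp_mem p hp h hh, rfl⟩
  · -- distality
    rintro f₁ hf₁ f₂ hf₂ ⟨h, hh⟩
    funext x
    apply hdistal (f₁ x) (f₂ x)
    refine ⟨h x, ?_⟩
    have hc : Continuous fun pq : (X → X) × (X → X) => (pq.1 x, pq.2 x) :=
      ((continuous_apply x).comp continuous_fst).prodMk
        ((continuous_apply x).comp continuous_snd)
    have himg : (fun pq : (X → X) × (X → X) => (pq.1 x, pq.2 x)) ''
        closure (Set.range fun g : G => (g • f₁, g • f₂)) ⊆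
        closure (Set.range fun g : G => (g • f₁ x, g • f₂ x)) := by
      refine (image_closure_subset_closure_image hc).trans (closure_mono ?_)
      rintro _ ⟨_, ⟨g, rfl⟩, rfl⟩
      exact ⟨g, rfl⟩
    exact himg ⟨(h, h), hh, rfl⟩
end
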